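/- arXiv:2311.17102 — 4 statements merged into one kernel-verified Lean document; each statement's English description precedes it below -/
import Mathlib

section
/- For every order k with 1 ≤ k ≤ n and every l with 0 ≤ l ≤ n−k, the B-spline B_{l,k} is (k−1)-times continuously differentiable on ℝ, i.e. B_{l,k} is of class C^{k−1} on all of ℝ. -/
/-- The B-splines over knots `ξ`, defined recursively: `Bspline ξ l 0` is the
indicator of the half-open interval `(ξ l, ξ (l+1)]`, and for order `j+1`,
`B_{l,j+1}(x) = ((x − ξ_l)/(ξ_{l+j+1} − ξ_l))·B_{l,j}(x)
             + ((ξ_{l+j+2} − x)/(ξ_{l+j+2} − ξ_{l+1}))·B_{l+1,j}(x)`. -/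
noncomputable def Bspline (ξ : ℕ → ℝ) : ℕ → ℕ → ℝ → ℝ
  | l, 0, x => Set.indicator (Set.Ioc (ξ l) (ξ (l + 1))) (fun _ => 1) x
  | l, j + 1, x =>
      ((x - ξ l) / (ξ (l + j + 1) - ξ l)) * Bspline ξ l j x +
      ((ξ (l + j + 2) - x) / (ξ (l + j + 2) - ξ (l + 1))) * Bspline ξ (l + 1) j x

/-! Off the knots each `B_{l,k}` is locally a polynomial, and the product rule applied to the
recursion gives `B'_{l,k} = k (B_{l,k-1}/(ξ_{l+k} - ξ_l) - B_{l+1,k-1}/(ξ_{l+k+1} - ξ_{l+1}))`.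
For `k ≥ 2` both sides are continuous (`B_{l,1}` is a hat function), so the identity extends
across the finitely many knots. Hence `B'_{l,k}` is a combination of splines of order `k - 1`,
and induction on `k` gives `B_{l,k} ∈ C^{k-1}`. -/

open Set Filter Topology

theorem hasDerivAt_of_eventually_hasDerivAt {f g : ℝ → ℝ} {x : ℝ}
    (hfg : ∀ᶠ y in 𝓝[≠] x, HasDerivAt f (g y) y) (hf : ContinuousAt f x)
    (hg : ContinuousAt g x) : HasDerivAt f (g x) x := by
  set s := {y | HasDerivAt f (g y) y}
  have hdiff : DifferentiableOn ℝ f s := fun y hy => hy.differentiableAt.differentiableWithinAt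
  have hlim : ∀ t ≤ 𝓝[≠] x, Tendsto (deriv f) t (𝓝 (g x)) := fun t ht =>
    (hg.tendsto.mono_left (ht.trans nhdsWithin_le_nhds)).congr' <|
      (ht (hfg.mono fun y hy => hy.deriv.symm))
  have hright := hasDerivWithinAt_Ici_of_tendsto_deriv hdiff hf.continuousWithinAt
    (nhdsGT_le_nhdsNE x hfg) (hlim _ (nhdsGT_le_nhdsNE x))
  have hleft := hasDerivWithinAt_Iic_of_tendsto_deriv hdiff hf.continuousWithinAt
    (nhdsLT_le_nhdsNE x hfg) (hlim _ (nhdsLT_le_nhdsNE x))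
  simpa using hleft.union hright

theorem bspline_succ (ξ : ℕ → ℝ) (l k : ℕ) :
    Bspline ξ l (k + 1) = fun x => ((x - ξ l) / (ξ (l + k + 1) - ξ l)) * Bspline ξ l k x +
      ((ξ (l + k + 2) - x) / (ξ (l + k + 2) - ξ (l + 1))) * Bspline ξ (l + 1) k x :=
  rfl

theorem bspline_zero_eventuallyEq {ξ : ℕ → ℝ} {l : ℕ} {x : ℝ} (ha : x ≠ ξ l)
    (hb : x ≠ ξ (l + 1)) : Bspline ξ l 0 =ᶠ[𝓝 x] fun _ => Bspline ξ l 0 x := by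
  by_cases hx : x ∈ Ioo (ξ l) (ξ (l + 1))
  · filter_upwards [isOpen_Ioo.mem_nhds hx] with y hy
    simp [Bspline, indicator_of_mem (Ioo_subset_Ioc_self hy),
      indicator_of_mem (Ioo_subset_Ioc_self hx)]
  · have hx' : x ∉ Icc (ξ l) (ξ (l + 1)) := fun h =>
      hx ⟨h.1.lt_of_ne' ha, h.2.lt_of_ne hb⟩
    filter_upwards [isClosed_Icc.isOpen_compl.mem_nhds hx'] with y hy
    simp [Bspline, indicator_of_notMem (fun h => hy (Ioc_subset_Icc_self h)),
      indicator_of_notMem (fun h => hx' (Ioc_subset_Icc_self h))]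

theorem bspline_one_eq_max_min {ξ : ℕ → ℝ} {l : ℕ} (h₁ : ξ l < ξ (l + 1))
    (h₂ : ξ (l + 1) < ξ (l + 2)) (x : ℝ) :
    Bspline ξ l 1 x =
      max 0 (min ((x - ξ l) / (ξ (l + 1) - ξ l))
        ((ξ (l + 2) - x) / (ξ (l + 2) - ξ (l + 1)))) := by
  simp only [Bspline, indicator, mem_Ioc]
  have d₁ : 0 < ξ (l + 1) - ξ l := sub_pos.2 h₁
  have d₂ : 0 < ξ (l + 2) - ξ (l + 1) := sub_pos.2 h₂
  rcases le_or_gt x (ξ l) with hxa | hxa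
  · have : (x - ξ l) / (ξ (l + 1) - ξ l) ≤ 0 :=
      div_nonpos_of_nonpos_of_nonneg (by linarith) d₁.le
    simp [not_lt.2 hxa, show ¬ ξ (l + 1) < x by linarith, min_le_of_left_le this]
  rcases le_or_gt x (ξ (l + 1)) with hxb | hxb
  · have hp : (x - ξ l) / (ξ (l + 1) - ξ l) ≤ 1 := (div_le_one d₁).2 (by linarith)
    have hq : 1 ≤ (ξ (l + 2) - x) / (ξ (l + 2) - ξ (l + 1)) :=
      (one_le_div d₂).2 (by linarith)
    have h0 : 0 ≤ (x - ξ l) / (ξ (l + 1) - ξ l) := div_nonneg (by linarith) d₁.le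
    simp [hxa, hxb, not_lt.2 hxb, min_eq_left (hp.trans hq), h0]
  rcases le_or_gt x (ξ (l + 2)) with hxc | hxc
  · have hp : 1 ≤ (x - ξ l) / (ξ (l + 1) - ξ l) := (one_le_div d₁).2 (by linarith)
    have hq : (ξ (l + 2) - x) / (ξ (l + 2) - ξ (l + 1)) ≤ 1 :=
      (div_le_one d₂).2 (by linarith)
    have h0 : 0 ≤ (ξ (l + 2) - x) / (ξ (l + 2) - ξ (l + 1)) :=
      div_nonneg (by linarith) d₂.le
    simp [hxb, hxc, not_le.2 hxb, min_eq_right (hq.trans hp), h0]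
  · have : (ξ (l + 2) - x) / (ξ (l + 2) - ξ (l + 1)) ≤ 0 :=
      div_nonpos_of_nonpos_of_nonneg (by linarith) d₂.le
    simp [not_le.2 hxb, not_le.2 hxc, min_le_of_right_le this]

theorem continuous_bspline {ξ : ℕ → ℝ} {l k : ℕ} (hk : 1 ≤ k)
    (hξ : StrictMonoOn ξ (Icc l (l + k + 1))) : Continuous (Bspline ξ l k) := by
  induction k, hk using Nat.le_induction generalizing l with
  | base =>
    have h₁ : ξ l < ξ (l + 1) := hξ ⟨le_rfl, by omega⟩ ⟨by omega, by omega⟩ (by omega)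
    have h₂ : ξ (l + 1) < ξ (l + 2) :=
      hξ ⟨by omega, by omega⟩ ⟨by omega, le_rfl⟩ (by omega)
    simp only [funext (bspline_one_eq_max_min h₁ h₂)]
    fun_prop
  | succ k hk ih =>
    rw [bspline_succ]
    have h₀ := ih (hξ.mono (Icc_subset_Icc le_rfl (by omega)))
    have h₁ := ih (l := l + 1) (hξ.mono (Icc_subset_Icc (by omega) (by omega)))
    fun_prop

noncomputable def bsplineDeriv (ξ : ℕ → ℝ) : ℕ → ℕ → ℝ → ℝ
  | _, 0, _ => 0
  | l, k + 1, x => (k + 1) * (Bspline ξ l k x / (ξ (l + k + 1) - ξ l) -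
      Bspline ξ (l + 1) k x / (ξ (l + k + 2) - ξ (l + 1)))

-- The left-hand side is the product-rule derivative of `bspline_succ`.
theorem bsplineDeriv_succ_eq {ξ : ℕ → ℝ} {l k : ℕ}
    (hξ : StrictMonoOn ξ (Icc l (l + k + 2))) (x : ℝ) :
    1 / (ξ (l + k + 1) - ξ l) * Bspline ξ l k x +
        (x - ξ l) / (ξ (l + k + 1) - ξ l) * bsplineDeriv ξ l k x +
      (-1 / (ξ (l + k + 2) - ξ (l + 1)) * Bspline ξ (l + 1) k x +
        (ξ (l + k + 2) - x) / (ξ (l + k + 2) - ξ (l + 1)) * bsplineDeriv ξ (l + 1) k x) =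
      bsplineDeriv ξ l (k + 1) x := by
  cases k with
  | zero =>
    simp only [bsplineDeriv]
    ring
  | succ k =>
    have hne : ∀ i j, l ≤ i → i < j → j ≤ l + k + 3 → ξ j - ξ i ≠ 0 :=
      fun i j hi hij hj => sub_ne_zero.2 (hξ ⟨hi, by omega⟩ ⟨by omega, hj⟩ hij).ne'
    have h₁ := hne l (l + k + 1) le_rfl (by omega) (by omega)
    have h₂ := hne l (l + k + 2) le_rfl (by omega) (by omega)
    have h₃ := hne (l + 1) (l + k + 2) (by omega) (by omega) (by omega)
    have h₄ := hne (l + 1) (l + k + 3) (by omega) (by omega) (by omega)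
    have h₅ := hne (l + 2) (l + k + 3) (by omega) (by omega) (by omega)
    simp only [bsplineDeriv, bspline_succ, show l + 1 + k + 1 = l + k + 2 by omega,
      show l + 1 + k + 2 = l + k + 3 by omega, show l + 1 + 1 = l + 2 by omega,
      show l + (k + 1) + 1 = l + k + 2 by omega, show l + (k + 1) + 2 = l + k + 3 by omega]
    push_cast
    field_simp
    ring

theorem hasDerivAt_bspline_of_notMem {ξ : ℕ → ℝ} {l k : ℕ} {x : ℝ}
    (hξ : StrictMonoOn ξ (Icc l (l + k + 1))) (hx : x ∉ ξ '' Icc l (l + k + 1)) :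
    HasDerivAt (Bspline ξ l k) (bsplineDeriv ξ l k x) x := by
  induction k generalizing l with
  | zero =>
    have ha : x ≠ ξ l := fun h => hx ⟨l, ⟨le_rfl, by omega⟩, h.symm⟩
    have hb : x ≠ ξ (l + 1) := fun h => hx ⟨l + 1, ⟨by omega, by omega⟩, h.symm⟩
    exact (hasDerivAt_const x _).congr_of_eventuallyEq (bspline_zero_eventuallyEq ha hb)
  | succ k ih =>
    have h₀ := ih (hξ.mono (Icc_subset_Icc le_rfl (by omega)))
      fun h => hx (image_mono (Icc_subset_Icc le_rfl (by omega)) h)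
    have h₁ := ih (l := l + 1) (hξ.mono (Icc_subset_Icc (by omega) (by omega)))
      fun h => hx (image_mono (Icc_subset_Icc (by omega) (by omega)) h)
    have hw₀ : HasDerivAt (fun y => (y - ξ l) / (ξ (l + k + 1) - ξ l))
        (1 / (ξ (l + k + 1) - ξ l)) x :=
      ((hasDerivAt_id' x).sub_const _).div_const _
    have hw₁ : HasDerivAt (fun y => (ξ (l + k + 2) - y) / (ξ (l + k + 2) - ξ (l + 1)))
        (-1 / (ξ (l + k + 2) - ξ (l + 1))) x :=
      ((hasDerivAt_id' x).const_sub _).div_const _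
    rw [← bsplineDeriv_succ_eq hξ]
    exact (hw₀.mul h₀).add (hw₁.mul h₁)

theorem hasDerivAt_bspline {ξ : ℕ → ℝ} {l k : ℕ} (hk : 2 ≤ k)
    (hξ : StrictMonoOn ξ (Icc l (l + k + 1))) (x : ℝ) :
    HasDerivAt (Bspline ξ l k) (bsplineDeriv ξ l k x) x := by
  obtain ⟨k, rfl⟩ : ∃ j, k = j + 2 := ⟨k - 2, by omega⟩
  have hknots : (ξ '' Icc l (l + k + 3)).Finite := (finite_Icc _ _).image ξ
  refine hasDerivAt_of_eventually_hasDerivAt ?_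
    (continuous_bspline (by omega) hξ).continuousAt ?_
  · filter_upwards [nhdsNE_le_cofinite x hknots.compl_mem_cofinite] with y hy
    exact hasDerivAt_bspline_of_notMem hξ hy
  · have h₀ := continuous_bspline (l := l) (k := k + 1) (by omega)
      (hξ.mono (Icc_subset_Icc le_rfl (by omega)))
    have h₁ := continuous_bspline (l := l + 1) (k := k + 1) (by omega)
      (hξ.mono (Icc_subset_Icc (by omega) (by omega)))
    unfold bsplineDeriv
    fun_prop

theorem contDiff_bspline_succ {ξ : ℕ → ℝ} {l k : ℕ}
    (hξ : StrictMonoOn ξ (Icc l (l + k + 2))) :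
    ContDiff ℝ k (Bspline ξ l (k + 1)) := by
  induction k generalizing l with
  | zero => simpa using continuous_bspline le_rfl hξ
  | succ k ih =>
    have hd := hasDerivAt_bspline (k := k + 2) (by omega) hξ
    have h₀ := ih (l := l) (hξ.mono (Icc_subset_Icc le_rfl (by omega)))
    have h₁ := ih (l := l + 1) (hξ.mono (Icc_subset_Icc (by omega) (by omega)))
    rw [Nat.cast_add_one, contDiff_succ_iff_deriv]
    refine ⟨fun x => (hd x).differentiableAt, by simp, ?_⟩
    rw [show deriv (Bspline ξ l (k + 1 + 1)) = bsplineDeriv ξ l (k + 2) from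
      funext fun x => (hd x).deriv]
    unfold bsplineDeriv
    fun_prop

theorem bspline_contDiff_general (n : ℕ) (ξ : ℕ → ℝ)
    (hξ : ∀ i ≤ n, ξ i < ξ (i + 1))
    (k : ℕ) (hk1 : 1 ≤ k) (hkn : k ≤ n)
    (l : ℕ) (hl : l ≤ n - k) :
    ContDiff ℝ (k - 1 : ℕ) (Bspline ξ l k) := by
  obtain ⟨k, rfl⟩ : ∃ j, k = j + 1 := ⟨k - 1, by omega⟩
  have hmono : StrictMonoOn ξ (Iic (n + 1)) :=
    strictMonoOn_Iic_of_lt_succ (n := n + 1) fun m hm => by simpa using hξ m (by omega)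
  simpa using contDiff_bspline_succ
    (hmono.mono (Icc_subset_Iic_self.trans (Iic_subset_Iic.2 (by omega))))

/-- For every order `k` with `1 ≤ k ≤ n` and every `l` with `0 ≤ l ≤ n−k`,
the B-spline `B_{l,k}` is `(k−1)`-times continuously differentiable on `ℝ`,
i.e. `B_{l,k}` is of class `C^{k−1}` on all of `ℝ`. -/
theorem bspline_contDiff (n : ℕ) (ξ : ℕ → ℝ) (hn : 1 ≤ n)
    (hξ : ∀ i ≤ n, ξ i < ξ (i + 1))
    (k : ℕ) (hk1 : 1 ≤ k) (hkn : k ≤ n)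
    (l : ℕ) (hl : l ≤ n - k) :
    ContDiff ℝ (k - 1 : ℕ) (Bspline ξ l k) :=
  bspline_contDiff_general n ξ hξ k hk1 hkn l hl
end

section
/- For every order k with 1 ≤ k ≤ n, the n−k+1 B-splines B_{0,k}, B_{1,k}, …, B_{n−k,k} are linearly independent in the real vector space of functions from ℝ to ℝ. -/
lemma Bspline_zero_of_le (ξ : ℕ → ℝ) (j : ℕ) : ∀ (l : ℕ) (x : ℝ),
    (∀ i, l ≤ i → i < l + j → ξ i ≤ ξ (i + 1)) → x ≤ ξ l → Bspline ξ l j x = 0 := by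
  induction j with
  | zero =>
    intro l x _ hx
    simp only [Bspline]
    apply Set.indicator_of_notMem
    simp only [Set.mem_Ioc, not_and_or, not_lt]
    exact Or.inl hx
  | succ j ih =>
    intro l x hm hx
    have h1 : Bspline ξ l j x = 0 := ih l x (fun i hi hi2 => hm i hi (by omega)) hx
    have hll : ξ l ≤ ξ (l + 1) := hm l le_rfl (by omega)
    have h2 : Bspline ξ (l + 1) j x = 0 :=
      ih (l + 1) x (fun i hi hi2 => hm i (by omega) (by omega)) (le_trans hx hll)
    simp [Bspline, h1, h2]

lemma xi_chain (ξ : ℕ → ℝ) (a : ℕ) : ∀ m : ℕ,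
    (∀ i, a ≤ i → i ≤ a + m → ξ i < ξ (i + 1)) → ξ a < ξ (a + m + 1) := by
  intro m
  induction m with
  | zero => intro h; exact h a le_rfl (by omega)
  | succ m ih =>
    intro h
    have h1 : ξ a < ξ (a + m + 1) := ih (fun i hi hi2 => h i hi (by omega))
    have h2 : ξ (a + m + 1) < ξ (a + m + 2) := h (a + m + 1) (by omega) (by omega)
    calc ξ a < ξ (a + m + 1) := h1
      _ < ξ (a + (m + 1) + 1) := by rw [show a + (m+1) + 1 = a + m + 2 by omega]; exact h2

lemma Bspline_pos (ξ : ℕ → ℝ) (j : ℕ) : ∀ (l : ℕ) (x : ℝ),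
    (∀ i, l ≤ i → i ≤ l + j → ξ i < ξ (i + 1)) → ξ l < x → x ≤ ξ (l + 1) →
    0 < Bspline ξ l j x := by
  induction j with
  | zero =>
    intro l x _ hx1 hx2
    simp only [Bspline]
    rw [Set.indicator_of_mem (Set.mem_Ioc.mpr ⟨hx1, hx2⟩)]
    norm_num
  | succ j ih =>
    intro l x hm hx1 hx2
    have hpos : 0 < Bspline ξ l j x := ih l x (fun i hi hi2 => hm i hi (by omega)) hx1 hx2
    have hden : ξ l < ξ (l + j + 1) := xi_chain ξ l j (fun i hi hi2 => hm i hi (by omega))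
    have hc1 : 0 < (x - ξ l) / (ξ (l + j + 1) - ξ l) :=
      div_pos (by linarith) (by linarith)
    have h2 : Bspline ξ (l + 1) j x = 0 :=
      Bspline_zero_of_le ξ j (l + 1) x
        (fun i hi hi2 => (hm i (by omega) (by omega)).le) hx2
    simp only [Bspline, h2, mul_zero, add_zero]
    exact mul_pos hc1 hpos

/-- For every order `k` with `1 ≤ k ≤ n`, the `n−k+1` B-splines
`B_{0,k}, B_{1,k}, …, B_{n−k,k}` are linearly independent in the real vector space
of functions from `ℝ` to `ℝ`. -/
theorem bspline_linearIndependent (n : ℕ) (ξ : ℕ → ℝ) (hn : 1 ≤ n)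
    (hξ : ∀ i ≤ n, ξ i < ξ (i + 1))
    (k : ℕ) (hk1 : 1 ≤ k) (hkn : k ≤ n) :
    LinearIndependent ℝ (fun l : Fin (n - k + 1) => Bspline ξ (l : ℕ) k) := by
  rw [Fintype.linearIndependent_iff]
  intro g hg
  have hgx : ∀ x : ℝ, ∑ m : Fin (n - k + 1), g m * Bspline ξ (m : ℕ) k x = 0 := by
    intro x
    have := congrFun hg x
    simpa [Finset.sum_apply, Pi.smul_apply, smul_eq_mul] using this
  have chain : ∀ a b : ℕ, a < b → b ≤ n + 1 → ξ a < ξ b := by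
    intro a b
    induction b with
    | zero => omega
    | succ b ihb =>
      intro hab hb
      rcases Nat.lt_succ_iff_lt_or_eq.mp hab with h | h
      · exact lt_trans (ihb h (by omega)) (hξ b (by omega))
      · subst h; exact hξ a (by omega)
  have key : ∀ N : ℕ, ∀ l : Fin (n - k + 1), (l : ℕ) = N → g l = 0 := by
    intro N
    induction N using Nat.strong_induction_on with
    | _ N ihN =>
      intro l hl
      have hlb : (l : ℕ) ≤ n - k := by have := l.isLt; omega
      set x : ℝ := (ξ (l : ℕ) + ξ ((l : ℕ) + 1)) / 2 with hxdef
      have hstep : ξ (l : ℕ) < ξ ((l : ℕ) + 1) := hξ (l : ℕ) (by omega)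
      have hx1 : ξ (l : ℕ) < x := by rw [hxdef]; linarith
      have hx2 : x ≤ ξ ((l : ℕ) + 1) := by rw [hxdef]; linarith
      have hzero : ∀ m : Fin (n - k + 1), m ∈ Finset.univ → m ≠ l →
          g m * Bspline ξ (m : ℕ) k x = 0 := by
        intro m _ hm
        have hmb : (m : ℕ) ≤ n - k := by have := m.isLt; omega
        have hne : (m : ℕ) ≠ (l : ℕ) := fun h => hm (Fin.ext h)
        rcases lt_or_gt_of_ne hne with h | h
        · rw [ihN (m : ℕ) (by omega) m rfl, zero_mul]
        · have hle : ξ ((l : ℕ) + 1) ≤ ξ (m : ℕ) := by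
            rcases Nat.eq_or_lt_of_le (by omega : (l : ℕ) + 1 ≤ (m : ℕ)) with h' | h'
            · rw [h']
            · exact (chain ((l : ℕ) + 1) (m : ℕ) h' (by omega)).le
          rw [Bspline_zero_of_le ξ k (m : ℕ) x
            (fun i hi hi2 => (hξ i (by omega)).le) (le_trans hx2 hle), mul_zero]
      have hone : g l * Bspline ξ (l : ℕ) k x = 0 := by
        rw [← hgx x]
        exact (Finset.sum_eq_single l hzero (by simp)).symm
      have hpos : 0 < Bspline ξ (l : ℕ) k x :=
        Bspline_pos ξ k (l : ℕ) x (fun i hi hi2 => hξ i (by omega)) hx1 hx2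
      exact (mul_eq_zero.mp hone).resolve_right (ne_of_gt hpos)
  intro i
  exact key (i : ℕ) i rfl
end

section
/- Let k ≥ 1 and let ξ_0 < ξ_1 < ⋯ < ξ_k be k+1 strictly increasing real knots (the case n = k−1 internal knots). If a function S : ℝ → ℝ vanishes outside [ξ_0, ξ_k], is (k−1)-times continuously differentiable on ℝ, and coincides on each interval [ξ_i, ξ_{i+1}] (i = 0,…,k−1) with a polynomial of degree at most k, then S is identically zero. In other words, the space of order-k splines with zero boundary conditions over k+1 knots is trivial. -/
open Polynomial Set

private lemma iteratedDeriv_polyEval (p : Polynomial ℝ) (j : ℕ) :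
    iteratedDeriv j (fun x : ℝ => p.eval x) = fun x => (derivative^[j] p).eval x := by
  induction j generalizing p with
  | zero => simp
  | succ n ih =>
    have hd : (deriv fun x : ℝ => p.eval x) = fun x => (derivative p).eval x :=
      funext fun x => p.deriv
    rw [iteratedDeriv_succ', hd, ih (derivative p), Function.iterate_succ_apply]

private lemma eqOn_deriv_of_eqOn_Ioo {S : ℝ → ℝ} {n : ℕ} (hS : ContDiff ℝ (n : ℕ) S)
    {p : Polynomial ℝ} {a b : ℝ} (hab : a < b)
    (heq : ∀ x ∈ Ioo a b, S x = p.eval x) {j : ℕ} (hj : j ≤ n) :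
    ∀ x ∈ Icc a b, iteratedDeriv j S x = (derivative^[j] p).eval x := by
  have h1 : Set.EqOn (iteratedDeriv j S) (iteratedDeriv j (fun x => p.eval x)) (Ioo a b) :=
    Set.EqOn.iteratedDeriv_of_isOpen heq isOpen_Ioo j
  rw [iteratedDeriv_polyEval p j] at h1
  have h2 : Continuous (iteratedDeriv j S) := hS.continuous_iteratedDeriv j (by exact_mod_cast hj)
  have h3 : Continuous fun x : ℝ => (derivative^[j] p).eval x := (derivative^[j] p).continuous
  have h4 := h1.closure h2 h3
  rwa [closure_Ioo hab.ne] at h4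

private lemma eq_C_mul_pow {p : Polynomial ℝ} {k : ℕ} {a : ℝ} (hdeg : p.degree ≤ (k : ℕ))
    (hk : 1 ≤ k) (hroot : ∀ j < k, (derivative^[j] p).eval a = 0) :
    ∃ c : ℝ, p = C c * (X - C a) ^ k := by
  by_cases hp : p = 0
  · exact ⟨0, by simp [hp]⟩
  · have h1 : (k - 1 : ℕ) < p.rootMultiplicity a := by
      apply Polynomial.lt_rootMultiplicity_of_isRoot_iterate_derivative hp
      intro m hm
      exact hroot m (by omega)
    have h2 : k ≤ p.rootMultiplicity a := by omega
    have h3 : (X - C a) ^ k ∣ p :=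
      (pow_dvd_pow _ h2).trans (p.pow_rootMultiplicity_dvd a)
    obtain ⟨q, hq⟩ := h3
    have hq0 : q ≠ 0 := by
      rintro rfl; simp at hq; exact hp hq
    have hXa : ((X - C a : Polynomial ℝ) ^ k).natDegree = k := by
      rw [Polynomial.natDegree_pow, Polynomial.natDegree_X_sub_C, mul_one]
    have hnd : p.natDegree = k + q.natDegree := by
      rw [hq, Polynomial.natDegree_mul (pow_ne_zero k (Polynomial.X_sub_C_ne_zero a)) hq0, hXa]
    have hpk : p.natDegree ≤ k := Polynomial.natDegree_le_iff_degree_le.2 hdeg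
    have hq1 : q.natDegree = 0 := by omega
    refine ⟨q.coeff 0, ?_⟩
    conv_lhs => rw [hq, Polynomial.eq_C_of_natDegree_le_zero (le_of_eq hq1)]
    ring

private lemma sum_C_mul_pow_eq_zero {k : ℕ} {η : Fin (k + 1) → ℝ}
    (hinj : Function.Injective η) {c : Fin (k + 1) → ℝ}
    (hsum : ∑ i, C (c i) * (X - C (η i)) ^ k = 0) : ∀ i, c i = 0 := by
  have key : ∀ j : Fin (k + 1), ∑ i, c i * (-η i) ^ (j : ℕ) = 0 := by
    intro j
    have h1 := congrArg (fun q : Polynomial ℝ => q.coeff (k - (j : ℕ))) hsum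
    simp only [Polynomial.finset_sum_coeff, Polynomial.coeff_zero] at h1
    have h2 : ∀ i : Fin (k + 1), (C (c i) * (X - C (η i)) ^ k).coeff (k - (j : ℕ))
        = c i * (-η i) ^ (j : ℕ) * (k.choose (k - (j : ℕ)) : ℝ) := by
      intro i
      rw [Polynomial.coeff_C_mul, sub_eq_add_neg, ← Polynomial.C_neg,
        Polynomial.coeff_X_add_C_pow]
      have : k - (k - (j : ℕ)) = (j : ℕ) := by have := j.is_le; omega
      rw [this, mul_assoc]
    rw [Finset.sum_congr rfl fun i _ => h2 i, ← Finset.sum_mul] at h1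
    have hch : (k.choose (k - (j : ℕ)) : ℝ) ≠ 0 := by
      have : 0 < k.choose (k - (j : ℕ)) := Nat.choose_pos (by omega)
      positivity
    exact (mul_eq_zero.1 h1).resolve_right hch
  have hneg : Function.Injective fun i => -η i :=
    fun a b hab => hinj (by simpa using neg_injective hab)
  have := Matrix.eq_zero_of_forall_pow_sum_mul_pow_eq_zero hneg key
  exact fun i => congrFun this i

/-- Let `k ≥ 1` and let `ξ_0 < ξ_1 < ⋯ < ξ_k` be `k+1` strictly increasing
real knots (the case `n = k−1` internal knots). If a function `S : ℝ → ℝ` vanishes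
outside `[ξ_0, ξ_k]`, is `(k−1)`-times continuously differentiable on `ℝ`, and coincides
on each interval `[ξ_i, ξ_{i+1}]` (`i = 0,…,k−1`) with a polynomial of degree at most `k`,
then `S` is identically zero. -/
theorem spline_space_trivial (k : ℕ) (hk : 1 ≤ k) (ξ : ℕ → ℝ)
    (hξ : ∀ i < k, ξ i < ξ (i + 1))
    (S : ℝ → ℝ)
    (hvanish : ∀ x : ℝ, x ∉ Set.Icc (ξ 0) (ξ k) → S x = 0)
    (hsmooth : ContDiff ℝ (k - 1 : ℕ) S)
    (hpoly : ∀ i < k, ∃ p : Polynomial ℝ, p.degree ≤ (k : ℕ) ∧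
        ∀ x ∈ Set.Icc (ξ i) (ξ (i + 1)), S x = p.eval x) :
    ∀ x : ℝ, S x = 0 := by
  classical
  choose! p hdeg heq using hpoly
  -- strict monotonicity on indices up to k
  have hmono : ∀ i j, i < j → j ≤ k → ξ i < ξ j := by
    intro i j hij hjk
    induction j with
    | zero => omega
    | succ m ih =>
      rcases Nat.lt_or_ge i m with h | h
      · exact lt_trans (ih h (by omega)) (hξ m (by omega))
      · have him : i = m := by omega
        subst him
        exact hξ i (by omega)
  -- derivative matching on each interval
  have F3 : ∀ i < k, ∀ j < k, ∀ x ∈ Icc (ξ i) (ξ (i + 1)),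
      iteratedDeriv j S x = (derivative^[j] (p i)).eval x := by
    intro i hi j hj x hx
    exact eqOn_deriv_of_eqOn_Ioo hsmooth (hξ i hi)
      (fun y hy => heq i hi y ⟨le_of_lt hy.1, le_of_lt hy.2⟩) (by omega) x hx
  -- vanishing of derivatives at both boundary knots
  have F1 : ∀ j < k, iteratedDeriv j S (ξ 0) = 0 := by
    intro j hj
    have h := eqOn_deriv_of_eqOn_Ioo (p := 0) hsmooth
      (show ξ 0 - 1 < ξ 0 by linarith)
      (fun y hy => by
        rw [hvanish y (fun hc => absurd hc.1 (not_le.2 hy.2))]; simp)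
      (show j ≤ k - 1 by omega) (ξ 0) ⟨by linarith, le_refl _⟩
    simpa using h
  have F2 : ∀ j < k, iteratedDeriv j S (ξ k) = 0 := by
    intro j hj
    have h := eqOn_deriv_of_eqOn_Ioo (p := 0) hsmooth
      (show ξ k < ξ k + 1 by linarith)
      (fun y hy => by
        rw [hvanish y (fun hc => absurd hc.2 (not_le.2 hy.1))]; simp)
      (show j ≤ k - 1 by omega) (ξ k) ⟨le_refl _, by linarith⟩
    simpa using h
  -- the extended family and knot-difference polynomials
  set P : ℕ → Polynomial ℝ := fun i => if i < k then p i else 0 with hP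
  set Q : ℕ → Polynomial ℝ := fun i => P i - (if i = 0 then 0 else P (i - 1)) with hQdef
  have hQroot : ∀ i ≤ k, ∀ j < k, (derivative^[j] (Q i)).eval (ξ i) = 0 := by
    intro i hik j hj
    have hQi : Q i = P i - (if i = 0 then 0 else P (i - 1)) := rfl
    rcases Nat.eq_zero_or_pos i with rfl | hipos
    · have : Q 0 = p 0 := by
        simp only [hQi, hP, if_pos rfl, ite_true, sub_zero, if_pos (show 0 < k from hk)]
      rw [this, ← F3 0 hk j hj (ξ 0) ⟨le_refl _, le_of_lt (hξ 0 hk)⟩]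
      exact F1 j hj
    · rcases eq_or_lt_of_le hik with rfl | hlt
      · have : Q i = -p (i - 1) := by
          simp only [hQi, hP, if_neg (by omega : ¬ i = 0), if_neg (lt_irrefl i),
            if_pos (by omega : i - 1 < i)]
          ring
        rw [this]
        have hii : i - 1 + 1 = i := by omega
        have := F3 (i - 1) (by omega) j hj (ξ i)
          (by rw [hii]; exact ⟨le_of_lt (hmono (i-1) i (by omega) hik), le_refl _⟩)
        simp only [Polynomial.iterate_derivative_neg, Polynomial.eval_neg]
        rw [← this, F2 j hj, neg_zero]
      · have : Q i = p i - p (i - 1) := by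
          simp [hQi, hP, if_neg (by omega : ¬ i = 0), if_pos hlt, if_pos (by omega : i - 1 < k)]
        rw [this]
        have hii : i - 1 + 1 = i := by omega
        have hL := F3 i hlt j hj (ξ i) ⟨le_refl _, le_of_lt (hξ i hlt)⟩
        have hR := F3 (i - 1) (by omega) j hj (ξ i)
          (by rw [hii]; exact ⟨le_of_lt (hmono (i-1) i (by omega) (by omega)), le_refl _⟩)
        simp only [Polynomial.iterate_derivative_sub, Polynomial.eval_sub]
        rw [← hL, ← hR, sub_self]
  have hQdeg : ∀ i, (Q i).degree ≤ (k : ℕ) := by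
    intro i
    have hPd : ∀ m, (P m).degree ≤ (k : ℕ) := by
      intro m
      by_cases hm : m < k
      · simpa [hP, hm] using hdeg m hm
      · simp [hP, hm]
    refine le_trans (Polynomial.degree_sub_le _ _) (max_le (hPd i) ?_)
    by_cases hi : i = 0
    · simp [hi]
    · simpa [hi] using hPd (i - 1)
  -- each Q i is c i • (X - ξ i)^k
  have hex : ∀ i : Fin (k + 1), ∃ c : ℝ, Q i = C c * (X - C (ξ i)) ^ k := by
    intro i
    exact eq_C_mul_pow (hQdeg i) hk (hQroot i (by omega))
  choose c hc using hex
  -- telescoping sum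
  have hsum : ∑ i : Fin (k + 1), Q (i : ℕ) = 0 := by
    rw [Fin.sum_univ_eq_sum_range (fun i => Q i) (k + 1)]
    have e1 : ∀ i, Q i = P i - (if i = 0 then 0 else P (i - 1)) := fun i => rfl
    calc ∑ i ∈ Finset.range (k + 1), Q i
        = ∑ i ∈ Finset.range (k + 1), P i
          - ∑ i ∈ Finset.range (k + 1), (if i = 0 then 0 else P (i - 1)) := by
          rw [← Finset.sum_sub_distrib]
      _ = 0 := by
          rw [Finset.sum_range_succ,
            Finset.sum_range_succ' (fun i => if i = 0 then 0 else P (i - 1)) k]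
          simp [hP]
  have hsum2 : ∑ i : Fin (k + 1), C (c i) * (X - C (ξ (i : ℕ))) ^ k = 0 := by
    rw [← hsum]
    exact Finset.sum_congr rfl fun i _ => (hc i).symm
  have hinj : Function.Injective fun i : Fin (k + 1) => ξ (i : ℕ) := by
    intro a b hab
    rcases lt_trichotomy (a : ℕ) (b : ℕ) with h | h | h
    · exact absurd hab (ne_of_lt (hmono a b h b.is_le))
    · exact Fin.ext h
    · exact absurd hab.symm (ne_of_lt (hmono b a h a.is_le))
  have hc0 := sum_C_mul_pow_eq_zero hinj hsum2
  have hQ0 : ∀ i ≤ k, Q i = 0 := by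
    intro i hik
    have := hc ⟨i, by omega⟩
    rw [hc0 ⟨i, by omega⟩] at this
    simpa using this
  -- all piece polynomials vanish
  have hp0 : ∀ i < k, p i = 0 := by
    intro i hik
    induction i with
    | zero =>
      have h0 := hQ0 0 (by omega)
      have : Q 0 = p 0 := by
        simp only [hQdef, hP, if_pos rfl, ite_true, sub_zero, if_pos (show 0 < k from hk)]
      rwa [this] at h0
    | succ m ih =>
      have hm := ih (by omega)
      have h0 := hQ0 (m + 1) (by omega)
      have : Q (m + 1) = p (m + 1) - p m := by
        simp [hQdef, hP, hik, show m < k by omega]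
      rw [this, hm, sub_zero] at h0
      exact h0
  -- coverage of the interval by the pieces
  intro x
  by_cases hx : x ∈ Set.Icc (ξ 0) (ξ k)
  · have cover : ∀ m, 1 ≤ m → m ≤ k → x ≤ ξ m → ∃ i < m, x ∈ Icc (ξ i) (ξ (i + 1)) := by
      intro m
      induction m with
      | zero => omega
      | succ n ih =>
        intro _ hmk hxm
        by_cases hn : n = 0
        · subst hn
          exact ⟨0, one_pos, hx.1, hxm⟩
        · by_cases hxn : x ≤ ξ n
          · obtain ⟨i, hi, h⟩ := ih (by omega) (by omega) hxn
            exact ⟨i, by omega, h⟩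
          · exact ⟨n, by omega, le_of_lt (lt_of_not_ge hxn), hxm⟩
    obtain ⟨i, hik, hxi⟩ := cover k hk le_rfl hx.2
    rw [heq i hik x hxi, hp0 i hik]
    simp
  · exact hvanish x hx
end

section
/- Fix k ≥ 1, n ≥ 0, and strictly increasing real knots ξ_0 < ξ_1 < ⋯ < ξ_{n+1}. The real vector space of (n+1)-tuples (p_0, p_1, …, p_n) of real polynomials, each of degree at most k, satisfying the smoothness constraints p_i^{(j)}(ξ_{i+1}) = p_{i+1}^{(j)}(ξ_{i+1}) for every internal knot index i = 0,…,n−1 and every derivative order j = 0,…,k−1, has dimension n + k + 1. (In particular, for n = k−1 this unrestricted spline space has dimension 2k.) -/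
open Polynomial

/-- A polynomial of degree at most `k` all of whose derivatives of order `< k`
vanish at `r` is a scalar multiple of `(X - r)^k`. -/
lemma spline_key {k : ℕ} {r : ℝ} {d : ℝ[X]}
    (hdeg : d.degree ≤ (k : WithBot ℕ))
    (h : ∀ j < k, (Polynomial.derivative^[j] d).eval r = 0) :
    ∃ c : ℝ, d = c • (Polynomial.X - Polynomial.C r) ^ k := by
  have hnd : d.natDegree ≤ k := natDegree_le_iff_degree_le.2 hdeg
  set t := taylor r d with ht_def
  have hcoeff : ∀ j < k, t.coeff j = 0 := by
    intro j hj
    have h1 : Polynomial.derivative^[j] d = (Nat.factorial j) • hasseDeriv j d := by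
      rw [← factorial_smul_hasseDeriv]; rfl
    have h2 := h j hj
    rw [h1, nsmul_eq_mul, eval_mul] at h2
    simp only [eval_natCast] at h2
    have hj' : ((Nat.factorial j : ℕ) : ℝ) ≠ 0 := Nat.cast_ne_zero.2 (Nat.factorial_ne_zero j)
    rw [taylor_coeff]
    exact (mul_eq_zero.1 h2).resolve_left hj'
  have htk : ∀ m, k < m → t.coeff m = 0 := by
    intro m hm
    apply coeff_eq_zero_of_natDegree_lt
    rw [ht_def, natDegree_taylor]; omega
  have ht : t = Polynomial.C (t.coeff k) * X ^ k := by
    ext m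
    rw [coeff_C_mul, coeff_X_pow]
    rcases lt_trichotomy m k with h' | h' | h'
    · simp [hcoeff m h', Nat.ne_of_lt h']
    · subst h'; simp
    · simp [htk m h', Nat.ne_of_gt h']
  refine ⟨t.coeff k, ?_⟩
  have hd : taylor (-r) t = d := by rw [ht_def, taylor_taylor]; simp
  rw [← hd, ht, taylor_apply, mul_comp, C_comp, pow_comp, X_comp, smul_eq_C_mul,
    sub_eq_add_neg, ← C_neg]
  congr 1
  simp [coeff_C_mul, coeff_X_pow]


lemma spline_sum_split {n : ℕ} (c : Fin n → ℝ) (B : Fin n → ℝ[X]) (i : Fin n) :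
    ∑ m : Fin n, (if (m : ℕ) < (i : ℕ) + 1 then c m else 0) • B m
      = (∑ m : Fin n, (if (m : ℕ) < (i : ℕ) then c m else 0) • B m) + c i • B i := by
  have key : ∀ m : Fin n,
      (if (m : ℕ) < (i : ℕ) + 1 then c m else 0) • B m
        = (if (m : ℕ) < (i : ℕ) then c m else 0) • B m
          + (if m = i then c i • B i else 0) := by
    intro m
    rcases lt_trichotomy (m : ℕ) (i : ℕ) with h | h | h
    · have hmi : m ≠ i := fun e => by rw [e] at h; exact lt_irrefl _ h
      simp [h, Nat.lt_succ_of_lt h, hmi]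
    · have hmi : m = i := Fin.ext h
      subst hmi
      simp [h]
    · have hmi : m ≠ i := fun e => by rw [e] at h; exact lt_irrefl _ h
      have h1 : ¬ (m : ℕ) < (i : ℕ) := by omega
      have h2 : ¬ (m : ℕ) < (i : ℕ) + 1 := by omega
      simp [h1, h2, hmi]
  rw [Finset.sum_congr rfl fun m _ => key m, Finset.sum_add_distrib,
    Finset.sum_ite_eq' Finset.univ i]
  simp

lemma spline_iter_deriv_add (j : ℕ) (f g : ℝ[X]) :
    Polynomial.derivative^[j] (f + g)
      = Polynomial.derivative^[j] f + Polynomial.derivative^[j] g := by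
  induction j with
  | zero => rfl
  | succ j ih => simp [Function.iterate_succ_apply', ih]

noncomputable def splinePhi (k n : ℕ) (ξ : ℕ → ℝ) :
    (Polynomial.degreeLT ℝ (k + 1) × (Fin n → ℝ)) →ₗ[ℝ] (Fin (n + 1) → ℝ[X]) where
  toFun x i := (x.1 : ℝ[X])
    + ∑ m : Fin n, (if (m : ℕ) < (i : ℕ) then x.2 m else 0) • (X - C (ξ ((m : ℕ) + 1))) ^ k
  map_add' x y := by
    funext i
    have key : ∀ m : Fin n,
        (if (m : ℕ) < (i : ℕ) then x.2 m + y.2 m else 0) • (X - C (ξ ((m : ℕ) + 1))) ^ k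
          = (if (m : ℕ) < (i : ℕ) then x.2 m else 0) • (X - C (ξ ((m : ℕ) + 1))) ^ k
            + (if (m : ℕ) < (i : ℕ) then y.2 m else 0) • (X - C (ξ ((m : ℕ) + 1))) ^ k := by
      intro m; split <;> simp [add_smul]
    simp only [Prod.fst_add, Prod.snd_add, Submodule.coe_add, Pi.add_apply, key,
      Finset.sum_add_distrib]
    abel
  map_smul' a x := by
    funext i
    have key : ∀ m : Fin n,
        (if (m : ℕ) < (i : ℕ) then a • x.2 m else 0) • (X - C (ξ ((m : ℕ) + 1))) ^ k
          = a • ((if (m : ℕ) < (i : ℕ) then x.2 m else 0) • (X - C (ξ ((m : ℕ) + 1))) ^ k) := by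
      intro m; split <;> simp [smul_smul]
    simp only [Prod.smul_fst, Prod.smul_snd, SetLike.val_smul, key, RingHom.id_apply,
      Pi.smul_apply, smul_add, Finset.smul_sum]

/-- Fix `k ≥ 1`, `n ≥ 0`, and strictly increasing real knots
`ξ_0 < ξ_1 < ⋯ < ξ_{n+1}`. The real vector space of `(n+1)`-tuples
`(p_0, p_1, …, p_n)` of real polynomials, each of degree at most `k`, satisfying the
smoothness constraints `p_i^{(j)}(ξ_{i+1}) = p_{i+1}^{(j)}(ξ_{i+1})` for every internal
knot index `i = 0,…,n−1` and every derivative order `j = 0,…,k−1`, has dimension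
`n + k + 1`. -/
theorem unrestricted_spline_space_dim (k n : ℕ) (hk : 1 ≤ k) (ξ : ℕ → ℝ)
    (hξ : ∀ i ≤ n, ξ i < ξ (i + 1)) :
    ∃ V : Submodule ℝ (Fin (n + 1) → Polynomial ℝ),
      (V : Set (Fin (n + 1) → Polynomial ℝ)) =
        {p | (∀ i, (p i).degree ≤ (k : WithBot ℕ)) ∧
          ∀ i : Fin n, ∀ j < k,
            (Polynomial.derivative^[j] (p i.castSucc)).eval (ξ ((i : ℕ) + 1)) =
            (Polynomial.derivative^[j] (p i.succ)).eval (ξ ((i : ℕ) + 1))} ∧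
      Module.finrank ℝ V = n + k + 1 := by
  refine ⟨LinearMap.range (splinePhi k n ξ), ?_, ?_⟩
  · ext p
    simp only [SetLike.mem_coe, LinearMap.mem_range, Set.mem_setOf_eq]
    constructor
    · rintro ⟨⟨q, c⟩, rfl⟩
      constructor
      · intro i
        show ((q : ℝ[X]) + ∑ m : Fin n,
          (if (m : ℕ) < (i : ℕ) then c m else 0) • (X - C (ξ ((m : ℕ) + 1))) ^ k).degree ≤ _
        refine le_trans (degree_add_le _ _) (max_le ?_ ?_)
        · have hq' : ∀ f : ℝ[X], f ∈ Polynomial.degreeLT ℝ (k + 1) →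
              f.degree ≤ (k : WithBot ℕ) := by
            rw [Polynomial.degreeLT_succ_eq_degreeLE]
            intro f hf
            exact mem_degreeLE.1 hf
          exact hq' _ q.2
        · refine le_trans (degree_sum_le _ _) (Finset.sup_le fun m _ => ?_)
          refine le_trans (degree_smul_le _ _) ?_
          rw [degree_pow, degree_X_sub_C]
          simp
      · intro i j hj
        have hsplit := spline_sum_split c (fun m => (X - C (ξ ((m : ℕ) + 1))) ^ k) i
        have hsucc : splinePhi k n ξ (q, c) i.succ
            = splinePhi k n ξ (q, c) i.castSucc
              + c i • (X - C (ξ ((i : ℕ) + 1))) ^ k := by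
          show (q : ℝ[X]) + _ = ((q : ℝ[X]) + _) + _
          rw [Fin.val_succ, Fin.coe_castSucc, hsplit, add_assoc]
        rw [hsucc, spline_iter_deriv_add, eval_add,
          Polynomial.iterate_derivative_smul, eval_smul,
          Polynomial.iterate_derivative_X_sub_pow]
        have : eval (ξ ((i : ℕ) + 1)) ((k.descFactorial j) • (X - C (ξ ((i : ℕ) + 1))) ^ (k - j))
            = 0 := by
          have hkj : k - j ≠ 0 := Nat.sub_ne_zero_of_lt hj
          simp [nsmul_eq_mul, eval_mul, eval_pow, zero_pow hkj]
        rw [this, smul_zero, add_zero]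
    · rintro ⟨hdeg, hder⟩
      have hq : p 0 ∈ Polynomial.degreeLT ℝ (k + 1) := by
        rw [degreeLT_succ_eq_degreeLE]
        exact mem_degreeLE.2 (hdeg 0)
      have hc : ∀ i : Fin n, ∃ c : ℝ,
          p i.succ - p i.castSucc = c • (X - C (ξ ((i : ℕ) + 1))) ^ k := by
        intro i
        apply spline_key
        · exact le_trans (degree_sub_le _ _) (max_le (hdeg _) (hdeg _))
        · intro j hj
          rw [Polynomial.iterate_derivative_sub, eval_sub, hder i j hj, sub_self]
      choose c hcv using hc
      refine ⟨(⟨p 0, hq⟩, c), ?_⟩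
      have main : ∀ t (h : t < n + 1), p ⟨t, h⟩
          = (p 0 : ℝ[X]) + ∑ m : Fin n,
            (if (m : ℕ) < t then c m else 0) • (X - C (ξ ((m : ℕ) + 1))) ^ k := by
        intro t
        induction t with
        | zero => intro h; simp
        | succ t ih =>
          intro h
          have htn : t < n := by omega
          have hstep := hcv ⟨t, htn⟩
          have e1 : (⟨t, htn⟩ : Fin n).succ = ⟨t + 1, h⟩ := rfl
          have e2 : (⟨t, htn⟩ : Fin n).castSucc = ⟨t, by omega⟩ := rfl
          rw [e1, e2, sub_eq_iff_eq_add] at hstep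
          have hsp := spline_sum_split c (fun m => (X - C (ξ ((m : ℕ) + 1))) ^ k) ⟨t, htn⟩
          simp only [Fin.val_mk] at hsp hstep ⊢
          rw [hstep, ih (by omega), hsp]
          abel
      funext i
      have hm := main i.val i.isLt
      simp only [Fin.eta] at hm
      show (p 0 : ℝ[X]) + _ = p i
      rw [hm]
  · have hinj : Function.Injective (splinePhi k n ξ) := by
      rw [← LinearMap.ker_eq_bot]
      apply LinearMap.ker_eq_bot'.2
      rintro ⟨q, c⟩ hx
      have h0 : ∀ i : Fin (n + 1), (q : ℝ[X]) + ∑ m : Fin n,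
          (if (m : ℕ) < (i : ℕ) then c m else 0) • (X - C (ξ ((m : ℕ) + 1))) ^ k = 0 :=
        fun i => congrFun hx i
      have hq0 : (q : ℝ[X]) = 0 := by simpa using h0 0
      have hc0 : ∀ i : Fin n, c i = 0 := by
        intro i
        have h1 := h0 i.castSucc
        have h2 := h0 i.succ
        rw [Fin.coe_castSucc] at h1
        rw [Fin.val_succ,
          spline_sum_split c (fun m => (X - C (ξ ((m : ℕ) + 1))) ^ k) i,
          ← add_assoc, h1, zero_add] at h2
        have hB0 : (X - C (ξ ((i : ℕ) + 1))) ^ k ≠ 0 := pow_ne_zero _ (X_sub_C_ne_zero _)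
        exact (smul_eq_zero.1 h2).resolve_right hB0
      refine Prod.ext (Subtype.ext hq0) (funext hc0)
    rw [LinearMap.finrank_range_of_inj hinj]
    haveI : Module.Finite ℝ (Polynomial.degreeLT ℝ (k + 1)) :=
      Module.Finite.equiv (Polynomial.degreeLTEquiv ℝ (k + 1)).symm
    rw [Module.finrank_prod, (Polynomial.degreeLTEquiv ℝ (k + 1)).finrank_eq,
      Module.finrank_fin_fun, Module.finrank_fin_fun]
    ring
end
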